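/- Let c ∈ ℝ with c ≠ 0, let γ, θ ∈ ℝ, let (L_j)_{j∈ℤ} and (R_j)_{j∈ℤ} be reals, and for each j ∈ ℤ let u_j : ℝ × ℝ → ℝ be infinitely differentiable (jointly in (t,x)) and satisfy the first-order wave PDE ∂_t u_j(t,x) = −c·∂_x u_j(t,x) for all (t,x). Suppose that for every t ∈ ℝ and every j the field edge condition with parameters (γ,θ) holds: (1−γ/2)(u_j(t,R_j) − u_j(t,L_j)) = (γ/2)(u_{j+1}(t,L_{j+1}) − u_{j−1}(t,R_{j−1})) + (γθ/2)(u_j(t,L_j) + u_j(t,R_j)) − (γθ/2)(u_{j+1}(t,L_{j+1}) + u_{j−1}(t,R_{j−1})). Then for every n ∈ ℕ and every t ∈ ℝ, the same field edge condition with parameters (γ,θ) holds with each u_j replaced by its n-th spatial derivative ∂_x^n u_j. -/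

import Mathlib

/-- The field edge condition (2.3a) with parameters `(γ, θ)` for a family `w` of
functions on elements `X_j = (L j, R j)`, `j ∈ ℤ`. -/
def FieldEdgeCond (γ θ : ℝ) (L R : ℤ → ℝ) (w : ℤ → ℝ → ℝ) : Prop :=
  ∀ j : ℤ,
    (1 - γ / 2) * (w j (R j) - w j (L j)) =
      (γ / 2) * (w (j + 1) (L (j + 1)) - w (j - 1) (R (j - 1)))
      + (γ * θ / 2) * (w j (L j) + w j (R j))
      - (γ * θ / 2) * (w (j + 1) (L (j + 1)) + w (j - 1) (R (j - 1)))

/-- Clairaut's theorem for a smooth function of two real variables, stated in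
terms of one-variable `deriv`s of the partial functions. -/
lemma deriv_swap_of_contDiff (f : ℝ × ℝ → ℝ) (hf : ContDiff ℝ (⊤ : ℕ∞) f) (t x : ℝ) :
    deriv (fun s => deriv (fun y => f (s, y)) x) t
      = deriv (fun y => deriv (fun s => f (s, y)) t) x := by
  have hdiff : ∀ p : ℝ × ℝ, DifferentiableAt ℝ f p := fun p =>
    (hf.differentiable (by simp)).differentiableAt
  have hF : ContDiff ℝ (⊤ : ℕ∞) (fderiv ℝ f) := hf.fderiv_right (by exact_mod_cast le_top)
  have hFd : ∀ p : ℝ × ℝ, DifferentiableAt ℝ (fderiv ℝ f) p := fun p =>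
    (hF.differentiable (by simp)).differentiableAt
  have h1 : ∀ s y : ℝ, deriv (fun y => f (s, y)) y = fderiv ℝ f (s, y) (0, 1) := fun s y =>
    ((hdiff (s, y)).hasFDerivAt.comp_hasDerivAt y
      ((hasDerivAt_const y s).prodMk (hasDerivAt_id y))).deriv
  have h2 : ∀ s y : ℝ, deriv (fun s => f (s, y)) s = fderiv ℝ f (s, y) (1, 0) := fun s y =>
    ((hdiff (s, y)).hasFDerivAt.comp_hasDerivAt s
      ((hasDerivAt_id s).prodMk (hasDerivAt_const s y))).deriv
  have key1 : HasDerivAt (fun s => fderiv ℝ f (s, x) (0, 1))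
      (fderiv ℝ (fderiv ℝ f) (t, x) (1, 0) (0, 1)) t := by
    have hc : HasDerivAt (fun s => fderiv ℝ f (s, x))
        (fderiv ℝ (fderiv ℝ f) (t, x) (1, 0)) t :=
      (hFd (t, x)).hasFDerivAt.comp_hasDerivAt t
        ((hasDerivAt_id t).prodMk (hasDerivAt_const t x))
    simpa using hc.clm_apply (hasDerivAt_const t ((0 : ℝ), (1 : ℝ)))
  have key2 : HasDerivAt (fun y => fderiv ℝ f (t, y) (1, 0))
      (fderiv ℝ (fderiv ℝ f) (t, x) (0, 1) (1, 0)) x := by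
    have hc : HasDerivAt (fun y => fderiv ℝ f (t, y))
        (fderiv ℝ (fderiv ℝ f) (t, x) (0, 1)) x :=
      (hFd (t, x)).hasFDerivAt.comp_hasDerivAt x
        ((hasDerivAt_const x t).prodMk (hasDerivAt_id x))
    simpa using hc.clm_apply (hasDerivAt_const x ((1 : ℝ), (0 : ℝ)))
  have hsym : IsSymmSndFDerivAt ℝ f (t, x) :=
    hf.contDiffAt.isSymmSndFDerivAt (le_of_eq_of_le (by rw [minSmoothness_of_isRCLikeNormedField]; rfl) (WithTop.coe_le_coe.mpr (le_top : (2:ℕ∞) ≤ ⊤)))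
  calc deriv (fun s => deriv (fun y => f (s, y)) x) t
      = deriv (fun s => fderiv ℝ f (s, x) (0, 1)) t := by simp only [h1]
    _ = fderiv ℝ (fderiv ℝ f) (t, x) (1, 0) (0, 1) := key1.deriv
    _ = fderiv ℝ (fderiv ℝ f) (t, x) (0, 1) (1, 0) := hsym _ _
    _ = deriv (fun y => fderiv ℝ f (t, y) (1, 0)) x := key2.deriv.symm
    _ = deriv (fun y => deriv (fun s => f (s, y)) t) x := by simp only [h2]

/-- Lemma 3.1: for smooth subgrid fields satisfying the first-order wave PDE
`u_t = −c u_x` and coupled by the field edge condition (2.3a), every spatial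
derivative `∂_x^n u_j` also satisfies the field edge condition. -/
theorem wave_edge_condition_derivatives
    (c : ℝ) (hc : c ≠ 0) (γ θ : ℝ) (L R : ℤ → ℝ)
    (u : ℤ → ℝ → ℝ → ℝ)
    (hu : ∀ j, ContDiff ℝ (⊤ : ℕ∞) (fun p : ℝ × ℝ => u j p.1 p.2))
    (hpde : ∀ j t x, deriv (fun s => u j s x) t = -c * deriv (fun y => u j t y) x)
    (hec : ∀ t, FieldEdgeCond γ θ L R (fun j x => u j t x)) :
    ∀ (n : ℕ) (t : ℝ),
      FieldEdgeCond γ θ L R (fun j x => iteratedDeriv n (u j t) x) := by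
  -- joint smoothness of all spatial derivatives
  have hsmooth : ∀ (j : ℤ) (n : ℕ),
      ContDiff ℝ (⊤ : ℕ∞) (fun p : ℝ × ℝ => iteratedDeriv n (u j p.1) p.2) := by
    intro j n
    induction n with
    | zero => simpa [iteratedDeriv_zero] using (hu j).of_le (by simp)
    | succ n ih =>
      have h : ContDiff ℝ (⊤ : ℕ∞)
          (fun p : ℝ × ℝ => fderiv ℝ (fun y => iteratedDeriv n (u j p.1) y) p.2) := by
        apply ContDiff.fderiv (f := fun (p : ℝ × ℝ) (y : ℝ) => iteratedDeriv n (u j p.1) y)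
          (g := fun p : ℝ × ℝ => p.2)
        · exact ih.comp ((contDiff_fst.comp contDiff_fst).prodMk contDiff_snd)
        · exact contDiff_snd
        · exact_mod_cast le_top
      have h' := h.clm_apply (contDiff_const (c := (1 : ℝ)))
      simp only [iteratedDeriv_succ]
      exact h'
  -- the PDE for all spatial derivatives
  have hP : ∀ (n : ℕ) (j : ℤ) (t x : ℝ),
      deriv (fun s => iteratedDeriv n (u j s) x) t = -c * iteratedDeriv (n + 1) (u j t) x := by
    intro n
    induction n with
    | zero =>
      intro j t x
      simpa [iteratedDeriv_zero, iteratedDeriv_succ] using hpde j t x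
    | succ n ih =>
      intro j t x
      have hswap := deriv_swap_of_contDiff (fun p : ℝ × ℝ => iteratedDeriv n (u j p.1) p.2)
        (hsmooth j n) t x
      calc deriv (fun s => iteratedDeriv (n + 1) (u j s) x) t
          = deriv (fun s => deriv (fun y => iteratedDeriv n (u j s) y) x) t := by
            simp only [iteratedDeriv_succ]
        _ = deriv (fun y => deriv (fun s => iteratedDeriv n (u j s) y) t) x := hswap
        _ = deriv (fun y => -c * iteratedDeriv (n + 1) (u j t) y) x := by
            simp only [ih]
        _ = -c * deriv (fun y => iteratedDeriv (n + 1) (u j t) y) x := by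
            rw [deriv_const_mul_field]
        _ = -c * iteratedDeriv (n + 1 + 1) (u j t) x := by
            conv_rhs => rw [iteratedDeriv_succ]
  -- the edge condition for all spatial derivatives, by induction
  intro n
  induction n with
  | zero =>
    intro t j
    simpa [iteratedDeriv_zero] using hec t j
  | succ n ih =>
    intro t j
    -- derivative-in-time facts at the four relevant points
    have key : ∀ (k : ℤ) (p : ℝ), HasDerivAt (fun s => iteratedDeriv n (u k s) p)
        (-c * iteratedDeriv (n + 1) (u k t) p) t := by
      intro k p
      have hd : DifferentiableAt ℝ (fun s => iteratedDeriv n (u k s) p) t := by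
        have h2 : ContDiff ℝ (⊤ : ℕ∞) (fun s : ℝ => iteratedDeriv n (u k s) p) :=
          (hsmooth k n).comp (contDiff_id.prodMk (contDiff_const (c := p)))
        exact (h2.differentiable (by simp)).differentiableAt
      have := hd.hasDerivAt
      rwa [hP n k t p] at this
    have hLfun : HasDerivAt
        (fun s => (1 - γ / 2) * (iteratedDeriv n (u j s) (R j) - iteratedDeriv n (u j s) (L j)))
        ((1 - γ / 2) * ((-c * iteratedDeriv (n + 1) (u j t) (R j))
          - (-c * iteratedDeriv (n + 1) (u j t) (L j)))) t :=
      ((key j (R j)).sub (key j (L j))).const_mul _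
    have hRfun : HasDerivAt
        (fun s =>
          (γ / 2) * (iteratedDeriv n (u (j + 1) s) (L (j + 1))
            - iteratedDeriv n (u (j - 1) s) (R (j - 1)))
          + (γ * θ / 2) * (iteratedDeriv n (u j s) (L j) + iteratedDeriv n (u j s) (R j))
          - (γ * θ / 2) * (iteratedDeriv n (u (j + 1) s) (L (j + 1))
            + iteratedDeriv n (u (j - 1) s) (R (j - 1))))
        ((γ / 2) * ((-c * iteratedDeriv (n + 1) (u (j + 1) t) (L (j + 1)))
            - (-c * iteratedDeriv (n + 1) (u (j - 1) t) (R (j - 1))))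
          + (γ * θ / 2) * ((-c * iteratedDeriv (n + 1) (u j t) (L j))
            + (-c * iteratedDeriv (n + 1) (u j t) (R j)))
          - (γ * θ / 2) * ((-c * iteratedDeriv (n + 1) (u (j + 1) t) (L (j + 1)))
            + (-c * iteratedDeriv (n + 1) (u (j - 1) t) (R (j - 1))))) t :=
      ((((key (j + 1) (L (j + 1))).sub (key (j - 1) (R (j - 1)))).const_mul _).add
        (((key j (L j)).add (key j (R j))).const_mul _)).sub
        (((key (j + 1) (L (j + 1))).add (key (j - 1) (R (j - 1)))).const_mul _)
    have hfuneq :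
        (fun s => (1 - γ / 2) * (iteratedDeriv n (u j s) (R j) - iteratedDeriv n (u j s) (L j)))
        = (fun s =>
          (γ / 2) * (iteratedDeriv n (u (j + 1) s) (L (j + 1))
            - iteratedDeriv n (u (j - 1) s) (R (j - 1)))
          + (γ * θ / 2) * (iteratedDeriv n (u j s) (L j) + iteratedDeriv n (u j s) (R j))
          - (γ * θ / 2) * (iteratedDeriv n (u (j + 1) s) (L (j + 1))
            + iteratedDeriv n (u (j - 1) s) (R (j - 1)))) :=
      funext fun s => ih s j
    have hderiv := (hfuneq ▸ hLfun).unique hRfun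
    refine mul_left_cancel₀ (neg_ne_zero.mpr hc) ?_
    linear_combination hderiv
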